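/- arXiv:quant-ph/0501057 — 6 statements merged into one kernel-verified Lean document; each statement's English description precedes it below -/
import Mathlib

section
/- Let A be an arbitrary complex matrix with rows indexed by a finite set X and columns by a finite set Y, and let R be a partition of X × Y into combinatorial rectangles. For each rectangle R ∈ R let A_R denote the submatrix of A restricted to R. Then the square of the spectral norm of A is at most the sum over R ∈ R of the squares of the spectral norms of the submatrices A_R. -/
open scoped BigOperators

/-- Family of probability distributions on the index set. -/
def IsDistFamily {α : Type*} {n : ℕ} (p : α → Fin n → ℝ) : Prop :=
  ∀ x, (∀ i, 0 ≤ p x i) ∧ ∑ i, p x i = 1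

/-- The sum probability of indices complexity measure. -/
noncomputable def sumPI {n : ℕ} (S : Set (Fin n → Bool)) (f : (Fin n → Bool) → Bool) : ℝ :=
  ⨅ p : {p : (Fin n → Bool) → Fin n → ℝ // IsDistFamily p},
    ⨆ q : {q : (Fin n → Bool) × (Fin n → Bool) // q.1 ∈ S ∧ q.2 ∈ S ∧ f q.1 ≠ f q.2},
      1 / ∑ i ∈ Finset.univ.filter (fun i => q.1.1 i ≠ q.1.2 i),
            Real.sqrt (p.1 q.1.1 i * p.1 q.1.2 i)

/-- The max probability of indices complexity measure. -/
noncomputable def maxPI {n : ℕ} (S : Set (Fin n → Bool)) (f : (Fin n → Bool) → Bool) : ℝ :=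
  ⨅ p : {p : (Fin n → Bool) → Fin n → ℝ // IsDistFamily p},
    ⨆ q : {q : (Fin n → Bool) × (Fin n → Bool) // q.1 ∈ S ∧ q.2 ∈ S ∧ f q.1 ≠ f q.2},
      1 / ⨆ i : {i : Fin n // q.1.1 i ≠ q.1.2 i}, Real.sqrt (p.1 q.1.1 i.1 * p.1 q.1.2 i.1)

/-- Spectral norm of a complex matrix. -/
noncomputable def specNorm {m n : Type*} [Fintype m] [Fintype n] (A : Matrix m n ℂ) : ℝ :=
  ⨆ v : {v : n → ℂ // ∑ i, ‖v i‖ ^ 2 ≤ 1}, Real.sqrt (∑ i, ‖A.mulVec v.1 i‖ ^ 2)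

/-- Spectral norm of a real matrix. -/
noncomputable def specNormR {m n : Type*} [Fintype m] [Fintype n] (A : Matrix m n ℝ) : ℝ :=
  ⨆ v : {v : n → ℝ // ∑ i, ‖v i‖ ^ 2 ≤ 1}, Real.sqrt (∑ i, ‖A.mulVec v.1 i‖ ^ 2)

/-- `Â_S`: the matrix agreeing with `A` on `S` and `0` elsewhere. -/
noncomputable def hatMat {X Y R : Type*} [Zero R] (A : Matrix X Y R) (S : Set (X × Y)) :
    Matrix X Y R :=
  fun x y => S.indicator (fun p => A p.1 p.2) (x, y)

/-!
The spectral norm is the best constant in `‖u ⬝ᵥ A *ᵥ v‖ ≤ C ‖u‖ ‖v‖`. Over a partition `𝓡` of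
`X × Y` into rectangles `R₁ × R₂` this bilinear form splits into the forms of the blocks `A_R`
evaluated at the restrictions `u|R₁`, `v|R₂`. Bounding each by `‖A_R‖ ‖u|R₁‖ ‖v|R₂‖` and applying
Cauchy–Schwarz over `𝓡` gives `√(∑ ‖A_R‖²) · √(∑ ‖u|R₁‖² ‖v|R₂‖²)`, and the second factor is
`‖u‖ ‖v‖` because the rectangles `R₁ × R₂` partition `X × Y`.
-/

open scoped Matrix.Norms.L2Operator
open WithLp Matrix

structure IsRectanglePartition {X Y : Type*} (𝓡 : Finset (Finset X × Finset Y)) : Prop where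
  cover : ∀ p : X × Y, ∃ r ∈ 𝓡, p.1 ∈ r.1 ∧ p.2 ∈ r.2
  disjoint : ∀ r ∈ 𝓡, ∀ r' ∈ 𝓡, r ≠ r' → ∀ p : X × Y,
    ¬((p.1 ∈ r.1 ∧ p.2 ∈ r.2) ∧ (p.1 ∈ r'.1 ∧ p.2 ∈ r'.2))

namespace IsRectanglePartition

variable {X Y : Type*} [Fintype X] [Fintype Y] {𝓡 : Finset (Finset X × Finset Y)}

theorem sum_eq {M : Type*} [AddCommMonoid M] (h𝓡 : IsRectanglePartition 𝓡) (f : X × Y → M) :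
    ∑ p, f p = ∑ r ∈ 𝓡, ∑ p ∈ r.1 ×ˢ r.2, f p := by
  have hpair : (𝓡 : Set (Finset X × Finset Y)).PairwiseDisjoint fun r => r.1 ×ˢ r.2 :=
    fun r hr r' hr' hne => Finset.disjoint_left.2 fun p hp hp' =>
      h𝓡.disjoint r hr r' hr' hne p ⟨Finset.mem_product.1 hp, Finset.mem_product.1 hp'⟩
  rw [← Finset.sum_disjiUnion _ _ hpair]
  congr
  ext p
  simpa using h𝓡.cover p

theorem sum_mul_sum {R : Type*} [CommSemiring R] (h𝓡 : IsRectanglePartition 𝓡)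
    (f : X → R) (g : Y → R) :
    ∑ r ∈ 𝓡, (∑ x ∈ r.1, f x) * ∑ y ∈ r.2, g y = (∑ x, f x) * ∑ y, g y := by
  simp only [Finset.sum_mul_sum, ← Finset.sum_product']
  exact (h𝓡.sum_eq fun p => f p.1 * g p.2).symm

end IsRectanglePartition

namespace EuclideanSpace

variable {𝕜 ι : Type*} [RCLike 𝕜]

lemma norm_toLp_star [Fintype ι] (u : ι → 𝕜) : ‖toLp 2 (star u)‖ = ‖toLp 2 u‖ := by
  simp [EuclideanSpace.norm_eq]

lemma norm_toLp_restrict_sq (u : ι → 𝕜) (s : Finset ι) :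
    ‖toLp 2 (fun x : s => u x)‖ ^ 2 = ∑ x ∈ s, ‖u x‖ ^ 2 := by
  rw [EuclideanSpace.norm_sq_eq, ← Finset.sum_coe_sort s]

end EuclideanSpace

namespace Matrix

variable {m n : Type*}

lemma dotProduct_mulVec_eq_sum {α : Type*} [CommSemiring α] [Fintype m] [Fintype n]
    (A : Matrix m n α) (u : m → α) (v : n → α) :
    u ⬝ᵥ A *ᵥ v = ∑ p : m × n, u p.1 * A p.1 p.2 * v p.2 := by
  simp only [dotProduct, mulVec, Finset.mul_sum, Fintype.sum_prod_type, mul_assoc]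

lemma dotProduct_submatrix_mulVec {α : Type*} [CommSemiring α] (A : Matrix m n α)
    (s : Finset m) (t : Finset n) (u : m → α) (v : n → α) :
    (fun x : s => u x) ⬝ᵥ A.submatrix (↑) (↑) *ᵥ (fun y : t => v y) =
      ∑ p ∈ s ×ˢ t, u p.1 * A p.1 p.2 * v p.2 := by
  rw [dotProduct_mulVec_eq_sum, Finset.sum_product, Fintype.sum_prod_type,
    ← Finset.sum_coe_sort s]
  simp only [submatrix_apply]
  congr! 1 with x
  exact Finset.sum_coe_sort t (fun y => u x * A x y * v y)

variable {𝕜 : Type*} [RCLike 𝕜] [Fintype m] [Fintype n]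

lemma norm_dotProduct_le (u w : m → 𝕜) : ‖u ⬝ᵥ w‖ ≤ ‖toLp 2 u‖ * ‖toLp 2 w‖ := by
  have h : u ⬝ᵥ w = inner 𝕜 (toLp 2 (star u)) (toLp 2 w) := by
    rw [EuclideanSpace.inner_toLp_toLp, star_star, dotProduct_comm]
  rw [h, ← EuclideanSpace.norm_toLp_star u]
  exact norm_inner_le_norm _ _

lemma star_dotProduct_self (w : m → 𝕜) : star w ⬝ᵥ w = (‖toLp 2 w‖ : 𝕜) ^ 2 := by
  rw [dotProduct_comm, ← EuclideanSpace.inner_toLp_toLp, inner_self_eq_norm_sq_to_K]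

variable [DecidableEq n]

lemma norm_dotProduct_mulVec_le (M : Matrix m n 𝕜) (u : m → 𝕜) (v : n → 𝕜) :
    ‖u ⬝ᵥ M *ᵥ v‖ ≤ ‖M‖ * ‖toLp 2 u‖ * ‖toLp 2 v‖ := by
  calc ‖u ⬝ᵥ M *ᵥ v‖ ≤ ‖toLp 2 u‖ * ‖toLp 2 (M *ᵥ v)‖ := norm_dotProduct_le u _
    _ ≤ ‖toLp 2 u‖ * (‖M‖ * ‖toLp 2 v‖) := by gcongr; exact M.l2_opNorm_mulVec (toLp 2 v)
    _ = ‖M‖ * ‖toLp 2 u‖ * ‖toLp 2 v‖ := by ring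

lemma l2_opNorm_le_of_forall_norm_dotProduct_mulVec_le (M : Matrix m n 𝕜) {C : ℝ} (hC : 0 ≤ C)
    (h : ∀ u v, ‖u ⬝ᵥ M *ᵥ v‖ ≤ C * ‖toLp 2 u‖ * ‖toLp 2 v‖) : ‖M‖ ≤ C := by
  rw [l2_opNorm_def]
  refine ContinuousLinearMap.opNorm_le_bound _ hC fun x => ?_
  -- test the bilinear bound against `u = star (M v)`
  have hw := h (star (M *ᵥ ofLp x)) (ofLp x)
  rw [star_dotProduct_self, EuclideanSpace.norm_toLp_star, norm_pow, RCLike.norm_ofReal,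
    abs_norm] at hw
  change ‖toLp 2 (M *ᵥ ofLp x)‖ ≤ C * ‖x‖
  rcases (norm_nonneg (toLp 2 (M *ᵥ ofLp x))).eq_or_lt with h0 | hpos
  · rw [← h0]
    positivity
  · exact le_of_mul_le_mul_right (by linarith) hpos

end Matrix

namespace IsRectanglePartition

variable {𝕜 : Type*} [RCLike 𝕜] {X Y : Type*} [Fintype X] [Fintype Y] [DecidableEq Y]
  {𝓡 : Finset (Finset X × Finset Y)}

theorem norm_dotProduct_mulVec_le (h𝓡 : IsRectanglePartition 𝓡) (A : Matrix X Y 𝕜)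
    (u : X → 𝕜) (v : Y → 𝕜) :
    ‖u ⬝ᵥ A *ᵥ v‖ ≤ √(∑ r ∈ 𝓡, ‖A.submatrix ((↑) : r.1 → X) ((↑) : r.2 → Y)‖ ^ 2) *
      ‖toLp 2 u‖ * ‖toLp 2 v‖ := by
  have hsplit : u ⬝ᵥ A *ᵥ v = ∑ r ∈ 𝓡, (fun x : r.1 => u x) ⬝ᵥ
      A.submatrix ((↑) : r.1 → X) ((↑) : r.2 → Y) *ᵥ (fun y : r.2 => v y) := by
    rw [dotProduct_mulVec_eq_sum, h𝓡.sum_eq]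
    exact Finset.sum_congr rfl fun r _ => (dotProduct_submatrix_mulVec ..).symm
  have hnorms : ∑ r ∈ 𝓡, (‖toLp 2 (fun x : r.1 => u x)‖ * ‖toLp 2 (fun y : r.2 => v y)‖) ^ 2
      = (‖toLp 2 u‖ * ‖toLp 2 v‖) ^ 2 := by
    simp only [mul_pow, EuclideanSpace.norm_toLp_restrict_sq]
    rw [EuclideanSpace.norm_sq_eq, EuclideanSpace.norm_sq_eq]
    exact h𝓡.sum_mul_sum _ _
  calc ‖u ⬝ᵥ A *ᵥ v‖
      ≤ ∑ r ∈ 𝓡, ‖A.submatrix ((↑) : r.1 → X) ((↑) : r.2 → Y)‖ *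
          (‖toLp 2 (fun x : r.1 => u x)‖ * ‖toLp 2 (fun y : r.2 => v y)‖) := by
        rw [hsplit]
        refine (norm_sum_le _ _).trans (Finset.sum_le_sum fun r _ => ?_)
        rw [← mul_assoc]
        exact Matrix.norm_dotProduct_mulVec_le _ _ _
    _ ≤ √(∑ r ∈ 𝓡, ‖A.submatrix ((↑) : r.1 → X) ((↑) : r.2 → Y)‖ ^ 2) *
          √(∑ r ∈ 𝓡, (‖toLp 2 (fun x : r.1 => u x)‖ * ‖toLp 2 (fun y : r.2 => v y)‖) ^ 2) :=
        Real.sum_mul_le_sqrt_mul_sqrt _ _ _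
    _ = _ := by rw [hnorms, Real.sqrt_sq (by positivity), mul_assoc]

theorem l2_opNorm_sq_le_sum (h𝓡 : IsRectanglePartition 𝓡) (A : Matrix X Y 𝕜) :
    ‖A‖ ^ 2 ≤ ∑ r ∈ 𝓡, ‖A.submatrix ((↑) : r.1 → X) ((↑) : r.2 → Y)‖ ^ 2 := by
  rw [← Real.le_sqrt (norm_nonneg _) (by positivity)]
  exact A.l2_opNorm_le_of_forall_norm_dotProduct_mulVec_le (Real.sqrt_nonneg _)
    (h𝓡.norm_dotProduct_mulVec_le A)

end IsRectanglePartition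

lemma specNorm_eq_l2_opNorm {m n : Type*} [Fintype m] [Fintype n] [DecidableEq n]
    (A : Matrix m n ℂ) : specNorm A = ‖A‖ := by
  have hbound : ∀ v : {v : n → ℂ // ∑ i, ‖v i‖ ^ 2 ≤ 1}, √(∑ i, ‖(A *ᵥ v.1) i‖ ^ 2) ≤ ‖A‖ := by
    rintro ⟨v, hv⟩
    have hv1 : ‖toLp 2 v‖ ≤ 1 := by
      rw [EuclideanSpace.norm_eq]
      exact Real.sqrt_le_one.2 hv
    calc √(∑ i, ‖(A *ᵥ v) i‖ ^ 2) = ‖toLp 2 (A *ᵥ v)‖ := by rw [EuclideanSpace.norm_eq]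
      _ ≤ ‖A‖ * ‖toLp 2 v‖ := A.l2_opNorm_mulVec (toLp 2 v)
      _ ≤ ‖A‖ := mul_le_of_le_one_right (norm_nonneg _) hv1
  refine le_antisymm (Real.iSup_le hbound (norm_nonneg _)) ?_
  rw [l2_opNorm_def]
  refine ContinuousLinearMap.opNorm_le_of_unit_norm (Real.iSup_nonneg fun _ => Real.sqrt_nonneg _)
    fun x hx => le_ciSup_of_le ⟨‖A‖, Set.forall_mem_range.2 hbound⟩ ⟨ofLp x, ?_⟩ ?_
  · rw [← EuclideanSpace.norm_sq_eq, hx, one_pow]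
  · exact (EuclideanSpace.norm_eq _).le

theorem spectral_norm_sq_le_sum_rectangle_partition_general
    {X Y : Type*} [Fintype X] [Fintype Y]
    (A : Matrix X Y ℂ) (𝓡 : Finset (Finset X × Finset Y))
    (hcover : ∀ p : X × Y, ∃ r ∈ 𝓡, p.1 ∈ r.1 ∧ p.2 ∈ r.2)
    (hdisj : ∀ r ∈ 𝓡, ∀ r' ∈ 𝓡, r ≠ r' → ∀ p : X × Y,
      ¬((p.1 ∈ r.1 ∧ p.2 ∈ r.2) ∧ (p.1 ∈ r'.1 ∧ p.2 ∈ r'.2))) :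
    specNorm A ^ 2 ≤
      ∑ r ∈ 𝓡, specNorm (A.submatrix (fun x : r.1 => (x : X)) (fun y : r.2 => (y : Y))) ^ 2 := by
  classical
  simp only [specNorm_eq_l2_opNorm]
  exact IsRectanglePartition.l2_opNorm_sq_le_sum ⟨hcover, hdisj⟩ A

theorem spectral_norm_sq_le_sum_rectangle_partition
    {X Y : Type*} [Fintype X] [Fintype Y] [DecidableEq X] [DecidableEq Y]
    (A : Matrix X Y ℂ) (𝓡 : Finset (Finset X × Finset Y))
    (hcover : ∀ p : X × Y, ∃ r ∈ 𝓡, p.1 ∈ r.1 ∧ p.2 ∈ r.2)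
    (hdisj : ∀ r ∈ 𝓡, ∀ r' ∈ 𝓡, r ≠ r' → ∀ p : X × Y,
      ¬((p.1 ∈ r.1 ∧ p.2 ∈ r.2) ∧ (p.1 ∈ r'.1 ∧ p.2 ∈ r'.2))) :
    specNorm A ^ 2 ≤
      ∑ r ∈ 𝓡, specNorm (A.submatrix (fun x : r.1 => (x : X)) (fun y : r.2 => (y : Y))) ^ 2 :=
  spectral_norm_sq_le_sum_rectangle_partition_general A 𝓡 hcover hdisj
end

section
/- For any matrix A over a field, indexed by X × Y, the map S ↦ rk(Â_S) is a rectangle measure: rk(Â_S) is monotone under S ⊆ T in the sense rk(Â_R) ≤ rk(Â_T) whenever R is a rectangle with R ⊆ T, and for any rectangle partition R of X × Y, rk(A) ≤ Σ_{R ∈ R} rk(Â_R). -/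
open scoped BigOperators

lemma rank_add_le'' {m n F : Type*} [Fintype m] [Fintype n] [Field F]
    (A B : Matrix m n F) : (A + B).rank ≤ A.rank + B.rank := by
  simp only [Matrix.rank]
  have h : LinearMap.range (A + B).mulVecLin ≤
      LinearMap.range A.mulVecLin ⊔ LinearMap.range B.mulVecLin := by
    rintro _ ⟨v, rfl⟩
    have : (A + B).mulVecLin v = A.mulVecLin v + B.mulVecLin v := by
      simp [Matrix.mulVecLin_apply, Matrix.add_mulVec]
    rw [this]
    exact Submodule.add_mem_sup ⟨v, rfl⟩ ⟨v, rfl⟩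
  exact (Submodule.finrank_mono h).trans
    (Submodule.finrank_add_le_finrank_add_finrank _ _)

lemma rank_sum_le' {m n F : Type*} [Fintype m] [Fintype n] [Field F]
    {ι : Type*} (s : Finset ι) (M : ι → Matrix m n F) :
    (∑ r ∈ s, M r).rank ≤ ∑ r ∈ s, (M r).rank := by
  classical
  induction s using Finset.cons_induction with
  | empty => simp [Matrix.rank_zero]
  | cons a s ha ih =>
    rw [Finset.sum_cons, Finset.sum_cons]
    exact (rank_add_le'' _ _).trans (by omega)

theorem hat_rank_is_rectangle_measure {X Y : Type*} [Fintype X] [Fintype Y]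
    [DecidableEq X] [DecidableEq Y] {F : Type*} [Field F] (A : Matrix X Y F) :
    (∀ (X₀ : Finset X) (Y₀ : Finset Y) (T : Set (X × Y)),
        (↑X₀ : Set X) ×ˢ (↑Y₀ : Set Y) ⊆ T →
        (hatMat A ((↑X₀ : Set X) ×ˢ (↑Y₀ : Set Y))).rank ≤ (hatMat A T).rank) ∧
    (∀ 𝓡 : Finset (Finset X × Finset Y),
      (∀ p : X × Y, ∃ r ∈ 𝓡, p.1 ∈ r.1 ∧ p.2 ∈ r.2) →
      (∀ r ∈ 𝓡, ∀ r' ∈ 𝓡, r ≠ r' → ∀ p : X × Y,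
        ¬((p.1 ∈ r.1 ∧ p.2 ∈ r.2) ∧ (p.1 ∈ r'.1 ∧ p.2 ∈ r'.2))) →
      A.rank ≤ ∑ r ∈ 𝓡, (hatMat A ((↑r.1 : Set X) ×ˢ (↑r.2 : Set Y))).rank) := by
  classical
  constructor
  · intro X₀ Y₀ T hsub
    have heq : hatMat A ((↑X₀ : Set X) ×ˢ (↑Y₀ : Set Y)) =
        (Matrix.diagonal fun x => if x ∈ X₀ then (1:F) else 0) * hatMat A T *
          (Matrix.diagonal fun y => if y ∈ Y₀ then (1:F) else 0) := by
      ext x y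
      rw [Matrix.mul_apply]
      simp only [Matrix.mul_apply, Matrix.diagonal_apply]
      rw [Finset.sum_eq_single y, Finset.sum_eq_single x]
      · by_cases hx : x ∈ X₀ <;> by_cases hy : y ∈ Y₀ <;>
          simp [hatMat, Set.indicator_apply, hx, hy]
        have hT : (x, y) ∈ T := hsub ⟨hx, hy⟩
        simp [hT]
      · intro b _ hb; simp [hb, Ne.symm hb]
      · intro h; simp at h
      · intro b _ hb; simp [hb, Ne.symm hb]
      · intro h; simp at h
    rw [heq]
    exact (Matrix.rank_mul_le_left _ _).trans (Matrix.rank_mul_le_right _ _)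
  · intro R hcover hdisj
    have heq : A = ∑ r ∈ R, hatMat A ((↑r.1 : Set X) ×ˢ (↑r.2 : Set Y)) := by
      ext x y
      obtain ⟨r₀, hr₀, hx₀, hy₀⟩ := hcover (x, y)
      rw [Matrix.sum_apply]
      rw [Finset.sum_eq_single r₀]
      · simp [hatMat, Set.indicator_apply, hx₀, hy₀]
      · intro r hr hne
        have := hdisj r hr r₀ hr₀ hne (x, y)
        simp [hatMat, Set.indicator_apply]
        intro hx hy
        exact absurd ⟨⟨hx, hy⟩, hx₀, hy₀⟩ this
      · intro h; exact absurd hr₀ h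
    calc A.rank = (∑ r ∈ R, hatMat A ((↑r.1 : Set X) ×ˢ (↑r.2 : Set Y))).rank := by rw [← heq]
      _ ≤ _ := rank_sum_le' _ _
end

section
/- Let f be a total Boolean function on {0,1}^n. Then maxPI(f) ≤ √(C₀(f) · C₁(f)), where C₀, C₁ are the zero- and one-certificate complexities of f. -/
open scoped BigOperators

theorem maxPI_le_sqrt_cert_total {n : ℕ} (f : (Fin n → Bool) → Bool) (c0 c1 : ℕ)
    (h0 : ∀ x, f x = false → ∃ I : Finset (Fin n), I.card ≤ c0 ∧
      ∀ y, (∀ i ∈ I, y i = x i) → f y = false)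
    (h1 : ∀ x, f x = true → ∃ I : Finset (Fin n), I.card ≤ c1 ∧
      ∀ y, (∀ i ∈ I, y i = x i) → f y = true) :
    maxPI Set.univ f ≤ Real.sqrt ((c0 : ℝ) * (c1 : ℝ)) := by
  classical
  rcases isEmpty_or_nonempty {p : (Fin n → Bool) → Fin n → ℝ // IsDistFamily p} with hE | hNE
  · unfold maxPI
    rw [Real.iInf_of_isEmpty]
    exact Real.sqrt_nonneg _
  · obtain ⟨p0, hp0⟩ := hNE
    have hn : 0 < n := by
      by_contra h
      have hn0 : n = 0 := Nat.eq_zero_of_not_pos h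
      have := (hp0 (fun _ => true)).2
      subst hn0
      simp at this
    -- choose certificates
    have hchoice : ∀ x : Fin n → Bool, ∃ I : Finset (Fin n),
        (f x = false → I.card ≤ c0) ∧ (f x = true → I.card ≤ c1) ∧
        ∀ y, (∀ i ∈ I, y i = x i) → f y = f x := by
      intro x
      by_cases hx : f x = false
      · obtain ⟨I, hc, hcert⟩ := h0 x hx
        exact ⟨I, fun _ => hc, fun ht => absurd (hx ▸ ht) (by simp [hx] at *),
          fun y hy => (hcert y hy).trans hx.symm⟩
      · have hx' : f x = true := by revert hx; cases f x <;> simp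
        obtain ⟨I, hc, hcert⟩ := h1 x hx'
        exact ⟨I, fun hf => by rw [hx'] at hf; exact absurd hf (by simp), fun _ => hc,
          fun y hy => (hcert y hy).trans hx'.symm⟩
    choose I hI0 hI1 hIcert using hchoice
    -- the distribution family
    set p : (Fin n → Bool) → Fin n → ℝ := fun x i =>
      if (I x).Nonempty then (if i ∈ I x then ((I x).card : ℝ)⁻¹ else 0) else (n : ℝ)⁻¹
      with hp_def
    have hp : IsDistFamily p := by
      intro x
      constructor
      · intro i
        simp only [hp_def]
        split_ifs <;> positivity
      · simp only [hp_def]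
        split_ifs with h
        · rw [Finset.sum_ite_mem, Finset.univ_inter, Finset.sum_const, nsmul_eq_mul]
          have hc : ((I x).card : ℝ) ≠ 0 :=
            Nat.cast_ne_zero.mpr (Finset.card_pos.mpr h).ne'
          exact mul_inv_cancel₀ hc
        · rw [Finset.sum_const, Finset.card_univ, Fintype.card_fin, nsmul_eq_mul]
          exact mul_inv_cancel₀ (Nat.cast_ne_zero.mpr hn.ne')
    -- key: for a 0-input and a 1-input, certificates intersect on a differing index
    have key : ∀ x y : Fin n → Bool, f x = false → f y = true →
        (0 < c0 ∧ 0 < c1) ∧ ∃ i, x i ≠ y i ∧ ((c0 : ℝ) * c1)⁻¹ ≤ p x i * p y i := by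
      intro x y hfx hfy
      have hint : ∃ i ∈ I x ∩ I y, x i ≠ y i := by
        by_contra hcon
        push_neg at hcon
        set z : Fin n → Bool := fun i => if i ∈ I x then x i else y i with hz
        have hzx : f z = f x := hIcert x z (fun i hi => if_pos hi)
        have hzy : f z = f y := by
          refine hIcert y z (fun i hi => ?_)
          by_cases hix : i ∈ I x
          · simpa [hz, hix] using hcon i (Finset.mem_inter.mpr ⟨hix, hi⟩)
          · simp [hz, hix]
        rw [hzx, hfx] at hzy
        rw [hfy] at hzy
        exact Bool.noConfusion hzy
      obtain ⟨i, hiI, hxyi⟩ := hint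
      obtain ⟨hix, hiy⟩ := Finset.mem_inter.mp hiI
      have hxne : (I x).Nonempty := ⟨i, hix⟩
      have hyne : (I y).Nonempty := ⟨i, hiy⟩
      have hcxpos : 0 < (I x).card := Finset.card_pos.mpr hxne
      have hcypos : 0 < (I y).card := Finset.card_pos.mpr hyne
      have hc0 : 0 < c0 := lt_of_lt_of_le hcxpos (hI0 x hfx)
      have hc1 : 0 < c1 := lt_of_lt_of_le hcypos (hI1 y hfy)
      have hpx : p x i = ((I x).card : ℝ)⁻¹ := by simp [hp_def, hxne, hix]
      have hpy : p y i = ((I y).card : ℝ)⁻¹ := by simp [hp_def, hyne, hiy]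
      refine ⟨⟨hc0, hc1⟩, i, hxyi, ?_⟩
      rw [mul_inv, hpx, hpy]
      have h1 : ((c0 : ℝ))⁻¹ ≤ ((I x).card : ℝ)⁻¹ := by
        apply inv_anti₀
        · exact_mod_cast hcxpos
        · exact_mod_cast hI0 x hfx
      have h2 : ((c1 : ℝ))⁻¹ ≤ ((I y).card : ℝ)⁻¹ := by
        apply inv_anti₀
        · exact_mod_cast hcypos
        · exact_mod_cast hI1 y hfy
      exact mul_le_mul h1 h2 (by positivity) (by positivity)
    -- bound for each pair
    have main : ∀ x y : Fin n → Bool, f x ≠ f y →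
        1 / (⨆ i : {i : Fin n // x i ≠ y i}, Real.sqrt (p x i.1 * p y i.1))
          ≤ Real.sqrt ((c0 : ℝ) * c1) := by
      intro x y hf
      have hmain : (0 < c0 ∧ 0 < c1) ∧
          ∃ i, x i ≠ y i ∧ ((c0 : ℝ) * c1)⁻¹ ≤ p x i * p y i := by
        cases hfx : f x with
        | false =>
          have hfy : f y = true := by
            rw [hfx] at hf; revert hf; cases f y <;> simp
          exact key x y hfx hfy
        | true =>
          have hfy : f y = false := by
            rw [hfx] at hf; revert hf; cases f y <;> simp
          obtain ⟨hpos, i, hi, hle⟩ := key y x hfy hfx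
          exact ⟨hpos, i, fun h => hi h.symm, by rwa [mul_comm (p x i)]⟩
      obtain ⟨⟨hc0, hc1⟩, i, hxyi, hle⟩ := hmain
      have hS : Real.sqrt (((c0 : ℝ) * c1)⁻¹)
          ≤ ⨆ i : {i : Fin n // x i ≠ y i}, Real.sqrt (p x i.1 * p y i.1) := by
        refine le_trans (Real.sqrt_le_sqrt hle) ?_
        exact le_ciSup (f := fun i : {i : Fin n // x i ≠ y i} =>
          Real.sqrt (p x i.1 * p y i.1)) (Finite.bddAbove_range _) ⟨i, hxyi⟩
      have hpos : 0 < Real.sqrt (((c0 : ℝ) * c1)⁻¹) := by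
        apply Real.sqrt_pos.mpr
        positivity
      calc 1 / (⨆ i : {i : Fin n // x i ≠ y i}, Real.sqrt (p x i.1 * p y i.1))
          ≤ 1 / Real.sqrt (((c0 : ℝ) * c1)⁻¹) := one_div_le_one_div_of_le hpos hS
        _ = Real.sqrt ((c0 : ℝ) * c1) := by
            rw [Real.sqrt_inv, one_div, inv_inv]
    -- finish
    unfold maxPI
    have hbdd : BddBelow (Set.range fun p : {p : (Fin n → Bool) → Fin n → ℝ // IsDistFamily p} =>
        ⨆ q : {q : (Fin n → Bool) × (Fin n → Bool) //
            q.1 ∈ (Set.univ : Set (Fin n → Bool)) ∧ q.2 ∈ Set.univ ∧ f q.1 ≠ f q.2},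
          1 / ⨆ i : {i : Fin n // q.1.1 i ≠ q.1.2 i},
            Real.sqrt (p.1 q.1.1 i.1 * p.1 q.1.2 i.1)) := by
      refine ⟨0, ?_⟩
      rintro _ ⟨pp, rfl⟩
      apply Real.iSup_nonneg
      intro q
      apply div_nonneg zero_le_one
      apply Real.iSup_nonneg
      intro i
      exact Real.sqrt_nonneg _
    refine le_trans (ciInf_le hbdd ⟨p, hp⟩) ?_
    exact Real.iSup_le (fun q => main q.1.1 q.1.2 q.2.2.2) (Real.sqrt_nonneg _)
end

section
/- Let f be a partial Boolean function on S ⊆ {0,1}^n. Then maxPI(f) ≤ min(√(n·C₀(f)), √(n·C₁(f))). -/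
open scoped BigOperators

lemma maxPI_le_aux {n : ℕ} (hn : 0 < n) (S : Set (Fin n → Bool)) (f : (Fin n → Bool) → Bool)
    (b : Bool) (c : ℕ)
    (h : ∀ x ∈ S, f x = b → ∃ I : Finset (Fin n), I.card ≤ c ∧
      ∀ y ∈ S, (∀ i ∈ I, y i = x i) → f y = b) :
    maxPI S f ≤ Real.sqrt ((n : ℝ) * (c : ℝ)) := by
  classical
  choose I hIcard hIcert using h
  set J : (Fin n → Bool) → Finset (Fin n) := fun x =>
    if hx : x ∈ S ∧ f x = b then I x hx.1 hx.2 else ∅ with hJ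
  set p : (Fin n → Bool) → Fin n → ℝ := fun x i =>
    if x ∈ S ∧ f x = b ∧ (J x).Nonempty then (if i ∈ J x then ((J x).card : ℝ)⁻¹ else 0)
    else (n : ℝ)⁻¹ with hpdef
  have hnR : (0 : ℝ) < (n : ℝ) := by exact_mod_cast hn
  have hp : IsDistFamily p := by
    intro x
    constructor
    · intro i
      by_cases hx : x ∈ S ∧ f x = b ∧ (J x).Nonempty
      · simp only [hpdef, if_pos hx]
        split
        · positivity
        · exact le_refl _
      · simp only [hpdef, if_neg hx]
        positivity
    · by_cases hx : x ∈ S ∧ f x = b ∧ (J x).Nonempty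
      · have hcard : ((J x).card : ℝ) ≠ 0 := by
          exact_mod_cast Finset.card_pos.mpr hx.2.2 |>.ne'
        simp only [hpdef, if_pos hx]
        rw [Finset.sum_ite_mem, Finset.univ_inter, Finset.sum_const, nsmul_eq_mul,
          mul_inv_cancel₀ hcard]
      · simp only [hpdef, if_neg hx]
        rw [Finset.sum_const, Finset.card_univ, Fintype.card_fin, nsmul_eq_mul,
          mul_inv_cancel₀ hnR.ne']
  have key : ∀ x y, x ∈ S → y ∈ S → f x = b → f y ≠ b →
      ∃ i : Fin n, x i ≠ y i ∧ 0 < c ∧ ((n : ℝ) * (c : ℝ))⁻¹ ≤ p x i * p y i := by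
    intro x y hx hy hfx hfy
    have hJx : J x = I x hx hfx := by simp [hJ, hx, hfx]
    have hne : (J x).Nonempty := by
      rcases Finset.eq_empty_or_nonempty (J x) with he | hne
      · exact absurd (hIcert x hx hfx y hy (fun i hi => by
          rw [← hJx, he] at hi; exact absurd hi (Finset.notMem_empty i))) hfy
      · exact hne
    obtain ⟨i, hiJ, hixy⟩ : ∃ i ∈ J x, y i ≠ x i := by
      by_contra hcon
      push_neg at hcon
      exact hfy (hIcert x hx hfx y hy (fun i hi => hcon i (by rwa [hJx])))
    have hcardpos : 0 < (J x).card := Finset.card_pos.mpr hne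
    have hcpos : 0 < c := lt_of_lt_of_le hcardpos (by rw [hJx]; exact hIcard x hx hfx)
    have hpx : p x i = ((J x).card : ℝ)⁻¹ := by
      simp [hpdef, hx, hfx, hne, hiJ]
    have hpy : p y i = (n : ℝ)⁻¹ := by
      have hny : ¬ (y ∈ S ∧ f y = b ∧ (J y).Nonempty) := fun hh => hfy hh.2.1
      simp only [hpdef, if_neg hny]
    refine ⟨i, fun hh => hixy hh.symm, hcpos, ?_⟩
    rw [hpx, hpy]
    have h1 : (c : ℝ)⁻¹ ≤ ((J x).card : ℝ)⁻¹ := by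
      apply inv_anti₀ (by exact_mod_cast hcardpos)
      exact_mod_cast (by rw [hJx]; exact hIcard x hx hfx : (J x).card ≤ c)
    have h2 : ((n : ℝ) * (c : ℝ))⁻¹ = (c : ℝ)⁻¹ * (n : ℝ)⁻¹ := by
      rw [mul_inv, mul_comm]
    rw [h2]
    exact mul_le_mul_of_nonneg_right h1 (by positivity)
  rw [maxPI]
  refine le_trans (ciInf_le ?_ ⟨p, hp⟩) ?_
  · refine ⟨0, ?_⟩
    rintro r ⟨q, rfl⟩
    exact Real.iSup_nonneg fun s => one_div_nonneg.mpr
      (Real.iSup_nonneg fun i => Real.sqrt_nonneg _)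
  · apply Real.iSup_le _ (Real.sqrt_nonneg _)
    rintro ⟨⟨x, y⟩, hx, hy, hf⟩
    dsimp only
    obtain ⟨i, hixy, hcpos, hle⟩ :
        ∃ i : Fin n, x i ≠ y i ∧ 0 < c ∧ ((n : ℝ) * (c : ℝ))⁻¹ ≤ p x i * p y i := by
      by_cases hfx : f x = b
      · exact key x y hx hy hfx (fun hh => hf (hfx.trans hh.symm))
      · have hfy : f y = b := by
          revert hfx hf
          cases b <;> cases hb1 : f x <;> cases hb2 : f y <;> simp
        obtain ⟨i, hiyx, hcpos, hle⟩ := key y x hy hx hfy hfx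
        exact ⟨i, fun hh => hiyx hh.symm, hcpos, by rwa [mul_comm (p y i) (p x i)] at hle⟩
    have hncpos : (0 : ℝ) < (n : ℝ) * (c : ℝ) := by
      have : (0:ℝ) < (c:ℝ) := by exact_mod_cast hcpos
      positivity
    have hsq : (Real.sqrt ((n : ℝ) * (c : ℝ)))⁻¹ ≤
        ⨆ j : {j : Fin n // x j ≠ y j}, Real.sqrt (p x j.1 * p y j.1) := by
      refine le_trans ?_ (le_ciSup (f := fun j : {j : Fin n // x j ≠ y j} =>
        Real.sqrt (p x j.1 * p y j.1)) ((Set.finite_range _).bddAbove) ⟨i, hixy⟩)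
      rw [← Real.sqrt_inv]
      exact Real.sqrt_le_sqrt hle
    have hspos : 0 < ⨆ j : {j : Fin n // x j ≠ y j}, Real.sqrt (p x j.1 * p y j.1) :=
      lt_of_lt_of_le (inv_pos.mpr (Real.sqrt_pos.mpr hncpos)) hsq
    rw [one_div]
    calc (⨆ j : {j : Fin n // x j ≠ y j}, Real.sqrt (p x j.1 * p y j.1))⁻¹
        ≤ ((Real.sqrt ((n : ℝ) * (c : ℝ)))⁻¹)⁻¹ :=
          inv_anti₀ (inv_pos.mpr (Real.sqrt_pos.mpr hncpos)) hsq
      _ = Real.sqrt ((n : ℝ) * (c : ℝ)) := inv_inv _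

theorem maxPI_le_sqrt_cert_partial {n : ℕ} (S : Set (Fin n → Bool))
    (f : (Fin n → Bool) → Bool) (c0 c1 : ℕ)
    (h0 : ∀ x ∈ S, f x = false → ∃ I : Finset (Fin n), I.card ≤ c0 ∧
      ∀ y ∈ S, (∀ i ∈ I, y i = x i) → f y = false)
    (h1 : ∀ x ∈ S, f x = true → ∃ I : Finset (Fin n), I.card ≤ c1 ∧
      ∀ y ∈ S, (∀ i ∈ I, y i = x i) → f y = true) :
    maxPI S f ≤ min (Real.sqrt ((n : ℝ) * (c0 : ℝ))) (Real.sqrt ((n : ℝ) * (c1 : ℝ))) := by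
  rcases Nat.eq_zero_or_pos n with rfl | hn
  · have hemp : IsEmpty {p : (Fin 0 → Bool) → Fin 0 → ℝ // IsDistFamily p} := by
      constructor; rintro ⟨p, hp⟩
      have := (hp (fun _ => false)).2
      simp at this
    rw [maxPI, iInf_of_isEmpty, Real.sInf_empty]
    exact le_min (Real.sqrt_nonneg _) (Real.sqrt_nonneg _)
  · exact le_min (maxPI_le_aux hn S f false c0 h0) (maxPI_le_aux hn S f true c1 h1)
end

section
/- For the collision problem on alphabet Σ with |Σ| ≥ 2n, maxPI(Col) ≥ √(n/2): for every family of probability distributions {p_x}, there exist a 1-to-1 input x and a 2-to-1 input y such that max_{i : x_i ≠ y_i} √(p_x(i) p_y(i)) ≤ √(2/n). -/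
open scoped BigOperators

theorem collision_maxPI_lower {n : ℕ} (hn : 0 < n) (hev : Even n)
    {Sig : Type*} [Fintype Sig] [DecidableEq Sig] (hcard : 2 * n ≤ Fintype.card Sig)
    (p : (Fin n → Sig) → Fin n → ℝ)
    (hp : ∀ x, (∀ i, 0 ≤ p x i) ∧ ∑ i, p x i = 1) :
    ∃ x y : Fin n → Sig, Function.Injective x ∧ (∀ i, ∃! j, j ≠ i ∧ y j = y i) ∧
      ∀ i, x i ≠ y i → Real.sqrt (p x i * p y i) ≤ Real.sqrt (2 / (n : ℝ)) := by
  obtain ⟨m, hm⟩ := hev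
  -- an injective input x
  have hle : Fintype.card (Fin n) ≤ Fintype.card Sig := by
    rw [Fintype.card_fin]; omega
  obtain ⟨e⟩ := Function.Embedding.nonempty_of_card_le hle
  set x : Fin n → Sig := ⇑e with hxdef
  have hxinj : Function.Injective x := e.injective
  have hn' : (0:ℝ) < n := by positivity
  set T : Finset (Fin n) := Finset.univ.filter (fun i => 2 / (n:ℝ) < p x i) with hTdef
  have hTsum : (T.card : ℝ) * (2 / n) ≤ 1 := by
    calc (T.card : ℝ) * (2 / n) ≤ ∑ i ∈ T, p x i := by
          rw [← nsmul_eq_mul]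
          exact Finset.card_nsmul_le_sum T _ _
            (fun i hi => le_of_lt (Finset.mem_filter.mp hi).2)
      _ ≤ ∑ i, p x i := Finset.sum_le_sum_of_subset_of_nonneg (Finset.subset_univ T)
            (fun i _ _ => (hp x).1 i)
      _ = 1 := (hp x).2
  have hTcard : T.card ≤ m := by
    have h2 : (T.card : ℝ) * 2 ≤ n := by
      rw [← mul_div_assoc] at hTsum
      exact (div_le_one hn').mp hTsum
    have h3 : T.card * 2 ≤ n := by exact_mod_cast h2
    omega
  have hTc : m ≤ Tᶜ.card := by
    have : Tᶜ.card = n - T.card := by rw [Finset.card_compl, Fintype.card_fin]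
    omega
  obtain ⟨S, hST, hScard⟩ := Finset.exists_subset_card_eq hTc
  have hcompl : Sᶜ.card = m := by
    rw [Finset.card_compl, Fintype.card_fin, hScard]; omega
  let σ : {a // a ∈ S} ≃ {a // a ∈ Sᶜ} := Finset.equivOfCardEq (by rw [hScard, hcompl])
  let f : Fin n → Fin n := fun i =>
    if h : i ∈ S then (σ ⟨i, h⟩ : Fin n) else (σ.symm ⟨i, Finset.mem_compl.mpr h⟩ : Fin n)
  have hfS : ∀ i (h : i ∈ S), f i ∉ S := by
    intro i h
    have : f i = ((σ ⟨i, h⟩ : {a // a ∈ Sᶜ}) : Fin n) := dif_pos h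
    rw [this]
    exact Finset.mem_compl.mp (σ ⟨i, h⟩).2
  have hfnS : ∀ i (h : i ∉ S), f i ∈ S := by
    intro i h
    have : f i = ((σ.symm ⟨i, Finset.mem_compl.mpr h⟩ : {a // a ∈ S}) : Fin n) := dif_neg h
    rw [this]
    exact (σ.symm ⟨i, Finset.mem_compl.mpr h⟩).2
  have hff : ∀ i, f (f i) = i := by
    intro i
    by_cases h : i ∈ S
    · have h1 : f i ∉ S := hfS i h
      have e1 : f i = ((σ ⟨i, h⟩ : {a // a ∈ Sᶜ}) : Fin n) := dif_pos h
      have e2 : f (f i) = ((σ.symm ⟨f i, Finset.mem_compl.mpr h1⟩ : {a // a ∈ S}) : Fin n) :=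
        dif_neg h1
      rw [e2]
      have : (⟨f i, Finset.mem_compl.mpr h1⟩ : {a // a ∈ Sᶜ}) = σ ⟨i, h⟩ := Subtype.ext e1
      rw [this, Equiv.symm_apply_apply]
    · have h1 : f i ∈ S := hfnS i h
      have e1 : f i = ((σ.symm ⟨i, Finset.mem_compl.mpr h⟩ : {a // a ∈ S}) : Fin n) := dif_neg h
      have e2 : f (f i) = ((σ ⟨f i, h1⟩ : {a // a ∈ Sᶜ}) : Fin n) := dif_pos h1
      rw [e2]
      have : (⟨f i, h1⟩ : {a // a ∈ S}) = σ.symm ⟨i, Finset.mem_compl.mpr h⟩ := Subtype.ext e1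
      rw [this, Equiv.apply_symm_apply]
  have hfne : ∀ i, f i ≠ i := by
    intro i e
    by_cases h : i ∈ S
    · exact hfS i h (by rw [e]; exact h)
    · exact h (by rw [← e]; exact hfnS i h)
  set y : Fin n → Sig := fun i => if i ∈ S then x (f i) else x i with hydef
  have hyS : ∀ i, i ∈ S → y i = x (f i) := fun i h => if_pos h
  have hynS : ∀ i, i ∉ S → y i = x i := fun i h => if_neg h
  have hyf : ∀ i, y (f i) = y i := by
    intro i
    by_cases h : i ∈ S
    · rw [hynS _ (hfS i h), hyS _ h]
    · rw [hyS _ (hfnS i h), hff, hynS _ h]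
  have key : ∀ i j, y j = y i → j = i ∨ j = f i := by
    intro i j hji
    by_cases hi : i ∈ S <;> by_cases hj : j ∈ S
    · left
      rw [hyS _ hj, hyS _ hi] at hji
      have := hxinj hji
      have := congrArg f this
      rwa [hff, hff] at this
    · right
      rw [hynS _ hj, hyS _ hi] at hji
      exact hxinj hji
    · right
      rw [hyS _ hj, hynS _ hi] at hji
      have := hxinj hji
      have := congrArg f this
      rwa [hff] at this
    · left
      rw [hynS _ hj, hynS _ hi] at hji
      exact hxinj hji
  refine ⟨x, y, hxinj, ?_, ?_⟩
  · intro i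
    refine ⟨f i, ⟨hfne i, hyf i⟩, ?_⟩
    rintro j ⟨hji, hyj⟩
    rcases key i j hyj with h | h
    · exact absurd h hji
    · exact h
  · intro i hxy
    have hiS : i ∈ S := by
      by_contra h
      exact hxy (hynS i h).symm
    have h1 : p x i ≤ 2 / n := by
      have hiT : i ∉ T := Finset.mem_compl.mp (hST hiS)
      have : ¬ (2 / (n:ℝ) < p x i) := by
        intro hlt
        exact hiT (Finset.mem_filter.mpr ⟨Finset.mem_univ i, hlt⟩)
      linarith [not_lt.mp this]
    have h2 : p y i ≤ 1 := by
      rw [← (hp y).2]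
      exact Finset.single_le_sum (fun j _ => (hp y).1 j) (Finset.mem_univ i)
    apply Real.sqrt_le_sqrt
    calc p x i * p y i ≤ (2/n) * 1 := mul_le_mul h1 h2 ((hp y).1 i) (by positivity)
      _ = 2 / n := mul_one _
end

section
/- maxPI of the collision problem is at most √(2n): there is a family of probability distributions {p_x} such that every 1-to-1 input x and 2-to-1 input y differ at some index i with p_x(i)·p_y(i) ≥ 1/(2n). -/
open scoped BigOperators

theorem collision_maxPI_upper {n : ℕ} (hn : 0 < n) {Sig : Type*} [DecidableEq Sig] :
    ∃ p : (Fin n → Sig) → Fin n → ℝ,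
      (∀ x, (∀ i, 0 ≤ p x i) ∧ ∑ i, p x i = 1) ∧
      ∀ x y : Fin n → Sig, Function.Injective x → (∀ i, ∃! j, j ≠ i ∧ y j = y i) →
        ∃ i, x i ≠ y i ∧ 1 / (2 * (n : ℝ)) ≤ p x i * p y i := by
  classical
  set i0 : Fin n := ⟨0, hn⟩ with hi0
  refine ⟨fun z i =>
    if Function.Injective z then 1 / n
    else if h : ∃ j, j ≠ i0 ∧ z j = z i0 then
      (if i = i0 then 1/2 else 0) + (if i = h.choose then 1/2 else 0)
    else 1 / n, ?_, ?_⟩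
  · intro z
    by_cases hz : Function.Injective z
    · simp only [hz, if_pos]
      constructor
      · intro i; positivity
      · rw [Finset.sum_const, Finset.card_univ, Fintype.card_fin, nsmul_eq_mul]
        field_simp
    · simp only [hz, if_neg, not_false_iff]
      by_cases h : ∃ j, j ≠ i0 ∧ z j = z i0
      · have hj := h.choose_spec
        simp only [dif_pos h]
        constructor
        · intro i; positivity
        · rw [Finset.sum_add_distrib, Finset.sum_ite_eq' Finset.univ i0,
            Finset.sum_ite_eq' Finset.univ h.choose]
          simp; norm_num
      · simp only [dif_neg h]
        constructor
        · intro i; positivity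
        · rw [Finset.sum_const, Finset.card_univ, Fintype.card_fin, nsmul_eq_mul]
          field_simp
  · intro x y hx hy
    obtain ⟨j, ⟨hj1, hj2⟩, _⟩ := hy i0
    have hny : ¬ Function.Injective y := fun h => hj1 (h hj2)
    have hex : ∃ j, j ≠ i0 ∧ y j = y i0 := ⟨j, hj1, hj2⟩
    set j0 := hex.choose with hj0
    obtain ⟨hj0ne, hj0eq⟩ := hex.choose_spec
    have hpx : ∀ i, (if Function.Injective x then 1 / (n:ℝ)
        else if h : ∃ j, j ≠ i0 ∧ x j = x i0 then
          (if i = i0 then 1/2 else 0) + (if i = h.choose then 1/2 else 0)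
        else 1 / n) = 1 / n := by intro i; simp [hx]
    have hkey : ∀ i, i = i0 ∨ i = j0 → x i ≠ y i →
        ∃ i, x i ≠ y i ∧ 1 / (2 * (n : ℝ)) ≤
          (if Function.Injective x then 1 / (n:ℝ)
            else if h : ∃ j, j ≠ i0 ∧ x j = x i0 then
              (if i = i0 then 1/2 else 0) + (if i = h.choose then 1/2 else 0)
            else 1 / n) *
          (if Function.Injective y then 1 / (n:ℝ)
            else if h : ∃ j, j ≠ i0 ∧ y j = y i0 then
              (if i = i0 then 1/2 else 0) + (if i = h.choose then 1/2 else 0)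
            else 1 / n) := by
      intro i hi hne
      refine ⟨i, hne, ?_⟩
      rw [hpx i]
      simp only [hny, if_neg, not_false_iff, dif_pos hex, ← hj0]
      rcases hi with rfl | rfl
      · rw [if_pos rfl, if_neg (Ne.symm hj0ne)]
        have : (0:ℝ) < n := by exact_mod_cast hn
        rw [add_zero]; rw [div_mul_div_comm, one_mul, mul_comm]
      · rw [if_neg hj0ne, if_pos rfl]
        have : (0:ℝ) < n := by exact_mod_cast hn
        rw [zero_add]; rw [div_mul_div_comm, one_mul, mul_comm]
    by_cases h1 : x i0 ≠ y i0
    · exact hkey i0 (Or.inl rfl) h1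
    · push_neg at h1
      have h2 : x j0 ≠ y j0 := by
        intro h2
        exact hj0ne (hx (by rw [h2, hj0eq, ← h1]))
      exact hkey j0 (Or.inr rfl) h2
end
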